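/- arXiv:1905.04413 — 4 statements merged into one kernel-verified Lean document; each statement's English description precedes it below -/
import Mathlib

section
/- Let A be a symmetric nonnegative matrix indexed by a finite set E, and let l : E → ℝ be a function constrained to fixed values on a subset V ⊆ E. Define the energy E(l) = (1/2) ∑_{i,j} A_{ij} (l(e_i) − l(e_j))². Then any minimizer l* of E over functions agreeing with the constraints on V is harmonic on E \ V: for every e_i ∈ E \ V with D_{ii} = ∑_j A_{ij} > 0, l*(e_i) = (1/D_{ii}) ∑_j A_{ij} l*(e_j). -/
/-- Any minimizer of the label-smoothness energy, subject to fixed values on `V`,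
is harmonic on the complement of `V` (wherever the degree is positive). -/
theorem minimizer_is_harmonic {n : ℕ} (A : Matrix (Fin n) (Fin n) ℝ)
    (hsym : A.IsSymm) (hA : ∀ i j, 0 ≤ A i j)
    (V : Finset (Fin n)) (c : Fin n → ℝ) (lstar : Fin n → ℝ)
    (hconstr : ∀ v ∈ V, lstar v = c v)
    (hmin : ∀ l : Fin n → ℝ, (∀ v ∈ V, l v = c v) →
      (1 / 2) * ∑ i, ∑ j, A i j * (lstar i - lstar j) ^ 2 ≤
        (1 / 2) * ∑ i, ∑ j, A i j * (l i - l j) ^ 2) :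
    ∀ i ∉ V, 0 < (∑ j, A i j) →
      lstar i = (1 / ∑ j, A i j) * ∑ j, A i j * lstar j := by
  intro i hiV hD
  set d : Fin n → ℝ := fun k => if k = i then 1 else 0 with hd
  set S1 : ℝ := ∑ p, ∑ q, A p q * (d p - d q) * (lstar p - lstar q) with hS1def
  set S2 : ℝ := ∑ p, ∑ q, A p q * (d p - d q) ^ 2 with hS2def
  -- expansion of the energy along the perturbation direction d
  have expand : ∀ t : ℝ,
      ∑ p, ∑ q, A p q * ((lstar p + t * d p) - (lstar q + t * d q)) ^ 2
        = (∑ p, ∑ q, A p q * (lstar p - lstar q) ^ 2) + 2 * t * S1 + t ^ 2 * S2 := by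
    intro t
    rw [hS1def, hS2def, Finset.mul_sum, Finset.mul_sum, ← Finset.sum_add_distrib,
      ← Finset.sum_add_distrib]
    refine Finset.sum_congr rfl fun p _ => ?_
    rw [Finset.mul_sum, Finset.mul_sum, ← Finset.sum_add_distrib, ← Finset.sum_add_distrib]
    refine Finset.sum_congr rfl fun q _ => ?_
    ring
  have hS2 : 0 ≤ S2 := by
    apply Finset.sum_nonneg; intro p _
    apply Finset.sum_nonneg; intro q _
    exact mul_nonneg (hA p q) (sq_nonneg _)
  -- key inequality from minimality
  have hkey : ∀ t : ℝ, 0 ≤ S2 * (t * t) + (2 * S1) * t + 0 := by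
    intro t
    have hc : ∀ v ∈ V, (lstar v + t * d v) = c v := by
      intro v hv
      have hvi : v ≠ i := fun h => hiV (h ▸ hv)
      simp [hd, hvi, hconstr v hv]
    have := hmin (fun k => lstar k + t * d k) hc
    rw [expand t] at this
    nlinarith [this]
  have hdisc := discrim_le_zero (a := S2) (b := 2 * S1) (c := 0) hkey
  have hS1 : S1 = 0 := by
    rw [discrim] at hdisc
    nlinarith [sq_nonneg S1]
  -- compute S1
  have hS1val : S1 = 2 * ∑ q, A i q * (lstar i - lstar q) := by
    rw [hS1def]
    have hterm : ∀ p q, A p q * (d p - d q) * (lstar p - lstar q)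
        = (if p = i then A p q * (lstar p - lstar q) else 0)
          - (if q = i then A p q * (lstar p - lstar q) else 0) := by
      intro p q
      by_cases h1 : p = i <;> by_cases h2 : q = i <;> simp [hd, h1, h2]
    simp only [hterm, Finset.sum_sub_distrib]
    rw [Finset.sum_comm (f := fun p q => if p = i then A p q * (lstar p - lstar q) else 0)]
    simp only [Finset.sum_ite_eq', Finset.mem_univ, if_true]
    have : ∑ p, A p i * (lstar p - lstar i) = -∑ q, A i q * (lstar i - lstar q) := by
      rw [← Finset.sum_neg_distrib]
      refine Finset.sum_congr rfl fun q _ => ?_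
      rw [hsym.apply i q]
      ring
    rw [this]
    ring
  have hzero : ∑ q, A i q * (lstar i - lstar q) = 0 := by
    rw [hS1val] at hS1; linarith
  have hsplit : (∑ q, A i q) * lstar i = ∑ q, A i q * lstar q := by
    have : ∑ q, A i q * (lstar i - lstar q)
        = (∑ q, A i q) * lstar i - ∑ q, A i q * lstar q := by
      rw [Finset.sum_mul, ← Finset.sum_sub_distrib]
      exact Finset.sum_congr rfl fun q _ => by ring
    rw [this] at hzero; linarith
  field_simp
  linarith [hsplit]
end

section
/- Consider a finite weighted graph on vertex set E with symmetric nonnegative edge weight matrix A and positive degree matrix D. Let V ⊆ E be the labeled vertices with labels y : V → ℝ, and let P = D^{-1} A be partitioned into blocks P_VV, P_VE, P_EV, P_EE according to the split E = V ∪ (E\V). If every row sum of P_EE is at most ε < 1, then the label propagation scheme (propagate l ← P l, then reset l on V to y) converges, with the limit on unlabeled vertices given by l(E\V) = (I − P_EE)^{-1} P_EV y, independent of the initialization on E\V. -/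
open Filter

/-- Label propagation (propagate `l ← P l`, then reset labels on `V` to `y`)
converges on the unlabeled vertices to `(I - P_EE)⁻¹ P_EV y`, independently of
the initialization on `E \ V`. -/
theorem label_propagation_converges {n : ℕ} (A : Matrix (Fin n) (Fin n) ℝ)
    (hsym : A.IsSymm) (hA : ∀ i j, 0 ≤ A i j)
    (hD : ∀ i, 0 < ∑ j, A i j)
    (V : Finset (Fin n)) (y : Fin n → ℝ)
    (P : Matrix (Fin n) (Fin n) ℝ)
    (hP : ∀ i j, P i j = A i j / ∑ k, A i k)
    (PEE : Matrix {i : Fin n // i ∉ V} {i : Fin n // i ∉ V} ℝ)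
    (hPEE : ∀ i j, PEE i j = P i.1 j.1)
    (PEV : Matrix {i : Fin n // i ∉ V} {v : Fin n // v ∈ V} ℝ)
    (hPEV : ∀ i v, PEV i v = P i.1 v.1)
    (ε : ℝ) (hε1 : ε < 1) (hrow : ∀ i, ∑ j, PEE i j ≤ ε) :
    ∀ l : ℕ → Fin n → ℝ,
      (∀ v ∈ V, l 0 v = y v) →
      (∀ t i, l (t + 1) i = if i ∈ V then y i else ∑ j, P i j * l t j) →
      ∀ i, ∀ hi : i ∉ V,
        Tendsto (fun t => l t i) atTop
          (nhds (((1 - PEE)⁻¹.mulVec (PEV.mulVec fun v => y v.1)) ⟨i, hi⟩)) := by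
  intro l hl0 hlrec i hi
  haveI : Nonempty {i : Fin n // i ∉ V} := ⟨⟨i, hi⟩⟩
  -- nonnegativity of P entries
  have hPnn : ∀ i j, 0 ≤ P i j := by
    intro i j
    rw [hP]
    exact div_nonneg (hA i j) (le_of_lt (hD i))
  have hPEEnn : ∀ i j, 0 ≤ PEE i j := fun i j => by rw [hPEE]; exact hPnn _ _
  have hε0 : 0 ≤ ε :=
    le_trans (Finset.sum_nonneg fun j _ => hPEEnn ⟨i, hi⟩ j) (hrow ⟨i, hi⟩)
  -- invertibility of 1 - PEE
  have hdet : (1 - PEE).det ≠ 0 := by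
    intro h
    obtain ⟨v, hv0, hv⟩ := Matrix.exists_mulVec_eq_zero_iff.mpr h
    have hfix : PEE.mulVec v = v := by
      have := hv
      rw [Matrix.sub_mulVec, Matrix.one_mulVec, sub_eq_zero] at this
      exact this.symm
    obtain ⟨j0, _, hj0⟩ := Finset.exists_max_image Finset.univ (fun j => |v j|)
      ⟨⟨i, hi⟩, Finset.mem_univ _⟩
    have hpos : 0 < |v j0| := by
      obtain ⟨k, hk⟩ := Function.ne_iff.mp hv0
      exact lt_of_lt_of_le (abs_pos.mpr hk) (hj0 k (Finset.mem_univ _))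
    have : |v j0| ≤ ε * |v j0| := by
      calc |v j0| = |(PEE.mulVec v) j0| := by rw [hfix]
        _ = |∑ j, PEE j0 j * v j| := by simp [Matrix.mulVec, dotProduct]
        _ ≤ ∑ j, |PEE j0 j * v j| := Finset.abs_sum_le_sum_abs _ _
        _ ≤ ∑ j, PEE j0 j * |v j0| := by
            apply Finset.sum_le_sum
            intro j _
            rw [abs_mul, abs_of_nonneg (hPEEnn j0 j)]
            exact mul_le_mul_of_nonneg_left (hj0 j (Finset.mem_univ _)) (hPEEnn j0 j)
        _ = (∑ j, PEE j0 j) * |v j0| := by rw [Finset.sum_mul]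
        _ ≤ ε * |v j0| := mul_le_mul_of_nonneg_right (hrow j0) (le_of_lt hpos)
    nlinarith
  set c : {i : Fin n // i ∉ V} → ℝ := PEV.mulVec fun v => y v.1 with hc
  set x : {i : Fin n // i ∉ V} → ℝ := (1 - PEE)⁻¹.mulVec c with hx
  -- x is a fixed point
  have hfixed : x = c + PEE.mulVec x := by
    have h1 : (1 - PEE).mulVec x = c := by
      rw [hx, Matrix.mulVec_mulVec,
        Matrix.mul_nonsing_inv _ (isUnit_iff_ne_zero.mpr hdet), Matrix.one_mulVec]
    rw [Matrix.sub_mulVec, Matrix.one_mulVec] at h1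
    exact sub_eq_iff_eq_add.mp h1
  -- labeled vertices stay at y
  have hlV : ∀ t, ∀ v ∈ V, l t v = y v := by
    intro t
    induction t with
    | zero => exact hl0
    | succ t _ => intro v hv; rw [hlrec t v, if_pos hv]
  -- the recurrence on unlabeled vertices
  have hrec : ∀ t (j : {i : Fin n // i ∉ V}),
      l (t + 1) j.1 = c j + PEE.mulVec (fun k => l t k.1) j := by
    intro t j
    rw [hlrec t j.1, if_neg j.2]
    have hsplit : ∑ k, P j.1 k * l t k
        = ∑ k ∈ V, P j.1 k * l t k + ∑ k ∈ Vᶜ, P j.1 k * l t k :=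
      (Finset.sum_add_sum_compl V _).symm
    rw [hsplit]
    congr 1
    · rw [hc]
      simp only [Matrix.mulVec, dotProduct]
      rw [← Finset.sum_coe_sort V]
      exact Finset.sum_congr rfl fun v _ => by rw [hPEV, hlV t v.1 v.2]
    · simp only [Matrix.mulVec, dotProduct]
      rw [Finset.sum_subtype Vᶜ (fun k => Finset.mem_compl) (fun k => P j.1 k * l t k)]
      exact Finset.sum_congr rfl fun k _ => by rw [hPEE]
  -- error decay
  set M : ℝ := ∑ j : {i : Fin n // i ∉ V}, |l 0 j.1 - x j| with hM
  have hM0 : 0 ≤ M := Finset.sum_nonneg fun j _ => abs_nonneg _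
  have hbound : ∀ t (j : {i : Fin n // i ∉ V}), |l t j.1 - x j| ≤ ε ^ t * M := by
    intro t
    induction t with
    | zero =>
      intro j
      rw [pow_zero, one_mul, hM]
      exact Finset.single_le_sum (f := fun j => |l 0 j.1 - x j|)
        (fun k _ => abs_nonneg _) (Finset.mem_univ j)
    | succ t ih =>
      intro j
      have heq : l (t + 1) j.1 - x j = ∑ k, PEE j k * (l t k.1 - x k) := by
        have hxj := congrFun hfixed j
        simp only [Pi.add_apply] at hxj
        have h2 : ∑ k, PEE j k * (l t k.1 - x k)
            = (PEE.mulVec fun k => l t k.1) j - (PEE.mulVec x) j := by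
          simp only [Matrix.mulVec, dotProduct, ← Finset.sum_sub_distrib]
          exact Finset.sum_congr rfl fun k _ => by ring
        rw [h2, hrec t j, hxj]
        ring
      calc |l (t + 1) j.1 - x j| = |∑ k, PEE j k * (l t k.1 - x k)| := by rw [heq]
        _ ≤ ∑ k, |PEE j k * (l t k.1 - x k)| := Finset.abs_sum_le_sum_abs _ _
        _ ≤ ∑ k, PEE j k * (ε ^ t * M) := by
            apply Finset.sum_le_sum
            intro k _
            rw [abs_mul, abs_of_nonneg (hPEEnn j k)]
            exact mul_le_mul_of_nonneg_left (ih k) (hPEEnn j k)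
        _ = (∑ k, PEE j k) * (ε ^ t * M) := by rw [Finset.sum_mul]
        _ ≤ ε * (ε ^ t * M) := by
            apply mul_le_mul_of_nonneg_right (hrow j)
            positivity
        _ = ε ^ (t + 1) * M := by ring
  -- squeeze
  have htend0 : Tendsto (fun t => l t i - x ⟨i, hi⟩) atTop (nhds 0) := by
    apply squeeze_zero_norm (fun t => hbound t ⟨i, hi⟩)
    have : Tendsto (fun t : ℕ => ε ^ t) atTop (nhds 0) :=
      tendsto_pow_atTop_nhds_zero_of_lt_one hε0 hε1
    simpa using this.mul_const M
  have := htend0.add_const (x ⟨i, hi⟩)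
  simpa using this
end

section
/- With the setup of the label propagation theorem, the limit labeling l* defined by l*(v) = y_v on V and l*(E\V) = (I − P_EE)^{-1} P_EV y is harmonic on E\V: for each unlabeled vertex i, l*(i) = ∑_j P_{ij} l*(j), and hence l* is the minimizer of the energy E(l, A) = (1/2)∑_{ij} A_{ij}(l(i) − l(j))² subject to the constraints on V. -/
/-- The limit labeling of label propagation is harmonic on the unlabeled
vertices, and is therefore the minimizer of the energy subject to the
constraints on `V`. -/
theorem limit_labeling_harmonic_and_minimizes {n : ℕ}
    (A : Matrix (Fin n) (Fin n) ℝ)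
    (hsym : A.IsSymm) (hA : ∀ i j, 0 ≤ A i j)
    (hD : ∀ i, 0 < ∑ j, A i j)
    (V : Finset (Fin n)) (y : Fin n → ℝ)
    (P : Matrix (Fin n) (Fin n) ℝ)
    (hP : ∀ i j, P i j = A i j / ∑ k, A i k)
    (PEE : Matrix {i : Fin n // i ∉ V} {i : Fin n // i ∉ V} ℝ)
    (hPEE : ∀ i j, PEE i j = P i.1 j.1)
    (PEV : Matrix {i : Fin n // i ∉ V} {v : Fin n // v ∈ V} ℝ)
    (hPEV : ∀ i v, PEV i v = P i.1 v.1)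
    (ε : ℝ) (hε1 : ε < 1) (hrow : ∀ i, ∑ j, PEE i j ≤ ε)
    (lstar : Fin n → ℝ)
    (hlV : ∀ v ∈ V, lstar v = y v)
    (hlE : ∀ i, ∀ hi : i ∉ V,
      lstar i = ((1 - PEE)⁻¹.mulVec (PEV.mulVec fun v => y v.1)) ⟨i, hi⟩) :
    (∀ i ∉ V, lstar i = ∑ j, P i j * lstar j) ∧
    (∀ l : Fin n → ℝ, (∀ v ∈ V, l v = y v) →
      (1 / 2) * ∑ i, ∑ j, A i j * (lstar i - lstar j) ^ 2 ≤
        (1 / 2) * ∑ i, ∑ j, A i j * (l i - l j) ^ 2) := by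
  have hPnn : ∀ i j, 0 ≤ P i j := fun i j => by
    rw [hP]; exact div_nonneg (hA i j) (hD i).le
  have hPEEnn : ∀ i j, 0 ≤ PEE i j := fun i j => by rw [hPEE]; exact hPnn _ _
  -- invertibility of 1 - PEE
  have hdet : IsUnit (1 - PEE).det := by
    rw [isUnit_iff_ne_zero]
    apply det_ne_zero_of_sum_row_lt_diag
    intro k
    have hkk : PEE k k ≤ ε :=
      le_trans (Finset.single_le_sum (fun j _ => hPEEnn k j) (Finset.mem_univ k)) (hrow k)
    have hsum : ∑ j ∈ Finset.univ.erase k, ‖(1 - PEE) k j‖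
        = (∑ j, PEE k j) - PEE k k := by
      rw [← Finset.sum_erase_eq_sub (Finset.mem_univ k)]
      refine Finset.sum_congr rfl fun j hj => ?_
      have hjk : k ≠ j := (Finset.ne_of_mem_erase hj).symm
      rw [Matrix.sub_apply, Matrix.one_apply_ne hjk, Real.norm_eq_abs, zero_sub, abs_neg,
        abs_of_nonneg (hPEEnn k j)]
    have hdiag : ‖(1 - PEE) k k‖ = 1 - PEE k k := by
      have : PEE k k < 1 := lt_of_le_of_lt hkk hε1
      simp [Matrix.sub_apply, Matrix.one_apply_eq, Real.norm_eq_abs, abs_of_nonneg,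
        sub_nonneg.mpr this.le]
    rw [hsum, hdiag]
    have := hrow k
    linarith
  -- the key vector
  set b : {i : Fin n // i ∉ V} → ℝ := PEV.mulVec (fun v => y v.1) with hb
  set x : {i : Fin n // i ∉ V} → ℝ := (1 - PEE)⁻¹.mulVec b with hx
  have hMx : x - PEE.mulVec x = b := by
    have : (1 - PEE).mulVec x = b := by
      rw [hx, Matrix.mulVec_mulVec, Matrix.mul_nonsing_inv _ hdet, Matrix.one_mulVec]
    rwa [Matrix.sub_mulVec, Matrix.one_mulVec] at this
  have heq : ∀ ii : {i : Fin n // i ∉ V}, x ii - ∑ j, PEE ii j * x j = b ii := by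
    intro ii
    have := congrFun hMx ii
    simpa [Matrix.mulVec, dotProduct] using this
  -- harmonicity
  have harm : ∀ i ∉ V, lstar i = ∑ j, P i j * lstar j := by
    intro i hi
    have hsplit : ∑ j, P i j * lstar j
        = ∑ v ∈ V, P i v * lstar v + ∑ j ∈ Vᶜ, P i j * lstar j :=
      (Finset.sum_add_sum_compl V _).symm
    have h1 : ∑ v ∈ V, P i v * lstar v = b ⟨i, hi⟩ := by
      rw [Finset.sum_subtype V (fun v => Iff.rfl) (fun v => P i v * lstar v)]
      rw [hb, Matrix.mulVec, dotProduct]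
      refine Finset.sum_congr rfl fun v _ => ?_
      rw [hPEV, hlV v.1 v.2]
    have h2 : ∑ j ∈ Vᶜ, P i j * lstar j = ∑ j, PEE ⟨i, hi⟩ j * x j := by
      rw [Finset.sum_subtype Vᶜ (fun j => Finset.mem_compl) (fun j => P i j * lstar j)]
      refine Finset.sum_congr rfl fun j _ => ?_
      rw [hPEE, hlE j.1 j.2]
    have h3 := heq ⟨i, hi⟩
    rw [hsplit, h1, h2, hlE i hi]
    linarith
  refine ⟨harm, ?_⟩
  intro l hl
  set g : Fin n → ℝ := fun i => l i - lstar i with hg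
  -- for each i, g i * (row sum of A-weighted differences) vanishes
  have hTi : ∀ i, g i * ∑ j, A i j * (lstar i - lstar j) = 0 := by
    intro i
    by_cases hi : i ∈ V
    · have : g i = 0 := by simp [hg, hl i hi, hlV i hi]
      rw [this, zero_mul]
    · have hd : (∑ k, A i k) ≠ 0 := (hD i).ne'
      have hh := harm i hi
      have hsum : ∑ j, A i j * lstar j = (∑ k, A i k) * lstar i := by
        rw [hh, Finset.mul_sum]
        refine Finset.sum_congr rfl fun j _ => ?_
        rw [hP]
        field_simp
      have : ∑ j, A i j * (lstar i - lstar j) = 0 := by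
        simp only [mul_sub, Finset.sum_sub_distrib, ← Finset.sum_mul, hsum]
        ring
      rw [this, mul_zero]
  -- the cross term vanishes
  have hC : ∑ i, ∑ j, A i j * (lstar i - lstar j) * (g i - g j) = 0 := by
    have hsplit : ∀ i j, A i j * (lstar i - lstar j) * (g i - g j)
        = A i j * (lstar i - lstar j) * g i - A i j * (lstar i - lstar j) * g j := by
      intro i j; ring
    simp_rw [hsplit, Finset.sum_sub_distrib]
    have hswap : ∑ i, ∑ j, A i j * (lstar i - lstar j) * g j
        = - ∑ i, ∑ j, A i j * (lstar i - lstar j) * g i := by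
      rw [Finset.sum_comm, ← Finset.sum_neg_distrib]
      refine Finset.sum_congr rfl fun j _ => ?_
      rw [← Finset.sum_neg_distrib]
      refine Finset.sum_congr rfl fun i _ => ?_
      rw [(hsym.apply j i : A i j = A j i)]; ring
    rw [hswap]
    have hz : ∑ i, ∑ j, A i j * (lstar i - lstar j) * g i = 0 := by
      refine Finset.sum_eq_zero fun i _ => ?_
      have := hTi i
      rw [Finset.mul_sum] at this
      rw [← this]
      refine Finset.sum_congr rfl fun j _ => ?_
      ring
    rw [hz]; ring
  -- expand the energy
  have key : ∑ i, ∑ j, A i j * (l i - l j) ^ 2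
      = (∑ i, ∑ j, A i j * (lstar i - lstar j) ^ 2)
        + 2 * (∑ i, ∑ j, A i j * (lstar i - lstar j) * (g i - g j))
        + ∑ i, ∑ j, A i j * (g i - g j) ^ 2 := by
    have hpt : ∀ i j, A i j * (l i - l j) ^ 2
        = A i j * (lstar i - lstar j) ^ 2
          + 2 * (A i j * (lstar i - lstar j) * (g i - g j))
          + A i j * (g i - g j) ^ 2 := by
      intro i j; simp only [hg]; ring
    simp_rw [hpt, Finset.sum_add_distrib, Finset.mul_sum]
  have hQ : 0 ≤ ∑ i, ∑ j, A i j * (g i - g j) ^ 2 :=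
    Finset.sum_nonneg fun i _ => Finset.sum_nonneg fun j _ =>
      mul_nonneg (hA i j) (sq_nonneg _)
  rw [key, hC]
  nlinarith [hQ]
end

section
/- Let A be a symmetric nonnegative matrix with positive degrees, and suppose l* minimizes E(l) = (1/2)∑_{ij}A_{ij}(l(i)−l(j))² over all l with fixed values on V. If the minimizer is harmonic on E\V, the constrained values lie in [m, M], and P_EE has row sums ≤ ε < 1, then l*(i) ∈ [m, M] for all i (maximum principle). -/
/-- Auxiliary upper-bound maximum principle for a row-stochastic matrix. -/
lemma aux_max_principle {n : ℕ} (P : Matrix (Fin n) (Fin n) ℝ)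
    (hPnn : ∀ i j, 0 ≤ P i j) (hPsum : ∀ i, ∑ j, P i j = 1)
    (V : Finset (Fin n)) (ε : ℝ) (hε1 : ε < 1)
    (hrow : ∀ i ∉ V, ∑ j ∈ Finset.univ.filter (· ∉ V), P i j ≤ ε)
    (f : Fin n → ℝ) (M : ℝ)
    (hharm : ∀ i ∉ V, f i = ∑ j, P i j * f j)
    (hb : ∀ v ∈ V, f v ≤ M) : ∀ i, f i ≤ M := by
  intro i
  obtain ⟨i0, -, hmax⟩ := Finset.exists_max_image Finset.univ f ⟨i, Finset.mem_univ i⟩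
  have hi : f i ≤ f i0 := hmax i (Finset.mem_univ i)
  suffices h : f i0 ≤ M by linarith
  by_cases hi0 : i0 ∈ V
  · exact hb i0 hi0
  · set s : ℝ := ∑ j ∈ Finset.univ.filter (· ∉ V), P i0 j with hs_def
    set t : ℝ := ∑ j ∈ Finset.univ.filter (· ∈ V), P i0 j with ht_def
    have hts : t + s = 1 := by
      rw [ht_def, hs_def]
      rw [Finset.sum_filter_add_sum_filter_not Finset.univ (· ∈ V) (P i0)]
      exact hPsum i0
    have hsε : s ≤ ε := hrow i0 hi0
    have hsplit : f i0 = (∑ j ∈ Finset.univ.filter (· ∈ V), P i0 j * f j)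
        + ∑ j ∈ Finset.univ.filter (· ∉ V), P i0 j * f j := by
      rw [Finset.sum_filter_add_sum_filter_not Finset.univ (· ∈ V) (fun j => P i0 j * f j)]
      exact hharm i0 hi0
    have h1 : (∑ j ∈ Finset.univ.filter (· ∈ V), P i0 j * f j) ≤ t * M := by
      rw [ht_def, Finset.sum_mul]
      refine Finset.sum_le_sum fun j hj => ?_
      have hjV : j ∈ V := (Finset.mem_filter.mp hj).2
      exact mul_le_mul_of_nonneg_left (hb j hjV) (hPnn i0 j)
    have h2 : (∑ j ∈ Finset.univ.filter (· ∉ V), P i0 j * f j) ≤ s * f i0 := by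
      rw [hs_def, Finset.sum_mul]
      refine Finset.sum_le_sum fun j _ => ?_
      exact mul_le_mul_of_nonneg_left (hmax j (Finset.mem_univ j)) (hPnn i0 j)
    have h3 : f i0 ≤ t * M + s * f i0 := by linarith
    have ht : 0 < t := by linarith
    have h4 : t * f i0 = f i0 - s * f i0 := by
      rw [show t = 1 - s by linarith]; ring
    have h5 : t * f i0 ≤ t * M := by linarith
    exact le_of_mul_le_mul_left h5 ht

/-- Maximum principle: a harmonic minimizer of the energy with constrained
values in `[m, M]` takes all its values in `[m, M]`. -/
theorem maximum_principle {n : ℕ} (A : Matrix (Fin n) (Fin n) ℝ)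
    (hsym : A.IsSymm) (hA : ∀ i j, 0 ≤ A i j)
    (hD : ∀ i, 0 < ∑ j, A i j)
    (V : Finset (Fin n)) (c : Fin n → ℝ) (m M : ℝ)
    (P : Matrix (Fin n) (Fin n) ℝ)
    (hP : ∀ i j, P i j = A i j / ∑ k, A i k)
    (ε : ℝ) (hε1 : ε < 1)
    (hrow : ∀ i ∉ V, ∑ j ∈ Finset.univ.filter (· ∉ V), P i j ≤ ε)
    (lstar : Fin n → ℝ)
    (hconstr : ∀ v ∈ V, lstar v = c v)
    (hmin : ∀ l : Fin n → ℝ, (∀ v ∈ V, l v = c v) →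
      (1 / 2) * ∑ i, ∑ j, A i j * (lstar i - lstar j) ^ 2 ≤
        (1 / 2) * ∑ i, ∑ j, A i j * (l i - l j) ^ 2)
    (hharm : ∀ i ∉ V, lstar i = ∑ j, P i j * lstar j)
    (hbound : ∀ v ∈ V, m ≤ lstar v ∧ lstar v ≤ M) :
    ∀ i, m ≤ lstar i ∧ lstar i ≤ M := by
  have hPnn : ∀ i j, 0 ≤ P i j := fun i j => by
    rw [hP i j]; exact div_nonneg (hA i j) (le_of_lt (hD i))
  have hPsum : ∀ i, ∑ j, P i j = 1 := fun i => by
    simp only [hP i]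
    rw [← Finset.sum_div]
    exact div_self (ne_of_gt (hD i))
  intro i
  constructor
  · have := aux_max_principle P hPnn hPsum V ε hε1 hrow (fun j => -lstar j) (-m)
      (fun i hi => by rw [show (∑ j, P i j * -lstar j) = -∑ j, P i j * lstar j by simp, ← hharm i hi])
      (fun v hv => by simpa using (hbound v hv).1) i
    linarith
  · exact aux_max_principle P hPnn hPsum V ε hε1 hrow lstar M hharm
      (fun v hv => (hbound v hv).2) i
end
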